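/- arXiv:2602.16289 — 2 statements merged into one kernel-verified Lean document; each statement's English description precedes it below -/
import Mathlib

section
/- Let (G, ℐ, ≻) be a matroid-constrained matching instance with partial-order preferences. Then every Pareto-optimal set ℳ of ℐ-constrained matchings in G with |ℳ| ≥ 2 is popular among ℐ-constrained matchings. -/
open scoped Classical

/-- A matching in a bipartite graph with agent set `A`, object set `O` and adjacency
relation `adj`, represented by the partial assignment `M : A → Option O` of objects to
agents: matched pairs are edges, and each object is matched to at most one agent. -/
def IsMatching {A O : Type*} (adj : A → O → Prop) (M : A → Option O) : Prop :=
  (∀ a o, M a = some o → adj a o) ∧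
  (∀ a a' o, M a = some o → M a' = some o → a = a')

/-- The lifted strict preference of agent `a` over matchings: `M ≻ₐ N` iff
`M(a) ≻ₐ N(a)`, where any assigned object is preferred to being unmatched. -/
def PrefM {A O : Type*} (pref : A → O → O → Prop) (a : A) (M N : A → Option O) : Prop :=
  (∃ o o', M a = some o ∧ N a = some o' ∧ pref a o o') ∨
  (∃ o, M a = some o ∧ N a = none)

/-- `pref a` is a strict partial order on the objects adjacent to `a`. -/
def IsPrefOrder {A O : Type*} (adj : A → O → Prop) (pref : A → O → O → Prop) : Prop :=
  ∀ a : A, (∀ o, ¬ pref a o o) ∧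
    (∀ o o' o'', pref a o o' → pref a o' o'' → pref a o o'') ∧
    (∀ o o', pref a o o' → adj a o ∧ adj a o')

/-- `φ(ℳ, N)`: the number of agents preferring some member of `ℳ` to `N`. -/
noncomputable def phiSet {A O : Type*} (pref : A → O → O → Prop)
    (Mset : Set (A → Option O)) (N : A → Option O) : ℕ :=
  {a : A | ∃ M ∈ Mset, PrefM pref a M N}.ncard

/-- `φ(N, ℳ)`: the number of agents preferring `N` to every member of `ℳ`. -/
noncomputable def phiOne {A O : Type*} (pref : A → O → O → Prop)
    (N : A → Option O) (Mset : Set (A → Option O)) : ℕ :=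
  {a : A | ∀ M ∈ Mset, PrefM pref a N M}.ncard

/-- `Mset` is popular (weakly Condorcet-winning) among the feasible matchings `F`:
`μ(ℳ, N) ≥ 0`, i.e. `φ(N, ℳ) ≤ φ(ℳ, N)`, for every feasible `N`. -/
def Popular {A O : Type*} (pref : A → O → O → Prop) (F : Set (A → Option O))
    (Mset : Set (A → Option O)) : Prop :=
  ∀ N ∈ F, phiOne pref N Mset ≤ phiSet pref Mset N

/-- A set `Y` of matchings Pareto-dominates a set `Z`. -/
def Dominates {A O : Type*} (pref : A → O → O → Prop)
    (Y Z : Set (A → Option O)) : Prop :=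
  Y.ncard ≤ Z.ncard ∧
  (∀ a : A, ∃ MY ∈ Y, ∀ MZ ∈ Z, ¬ PrefM pref a MZ MY) ∧
  (∃ a : A, ∃ MY ∈ Y, ∀ MZ ∈ Z, PrefM pref a MY MZ)

/-- `Mset` is Pareto-optimal: no set of feasible matchings Pareto-dominates it. -/
def ParetoOptimal {A O : Type*} (pref : A → O → O → Prop) (F : Set (A → Option O))
    (Mset : Set (A → Option O)) : Prop :=
  ¬ ∃ Y : Set (A → Option O), Y ⊆ F ∧ Dominates pref Y Mset

/-- The set `M(A)` of objects matched to agents. -/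
def matchedObjs {A O : Type*} (M : A → Option O) : Set O := {o | ∃ a, M a = some o}

/-- A matching is `ℐ`-constrained if the set of matched objects is independent. -/
def IsConstrained {A O : Type*} (adj : A → O → Prop) (Mat : Matroid O)
    (M : A → Option O) : Prop :=
  IsMatching adj M ∧ Mat.Indep (matchedObjs M)

/-!
Suppose a constrained matching `N` beats `ℳ`: more agents prefer `N` to every member of `ℳ`
(the set `G`) than prefer some member of `ℳ` to `N` (the set `B`). For `M₀ ∈ ℳ` let `U(M₀)` be
the agents matched in `M₀` for whom `M₀` is the unique best member of `ℳ`. If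
`|G \ U(M₀)| > |U(M₀) ∩ B|`, matroid augmentation lets us start from `M₀` on `U(M₀)`, move agents
of `U(M₀) \ B` to their partners in `N` one at a time, and finally add an agent of `G \ U(M₀)`
with its partner in `N`; replacing `M₀` by the result Pareto-dominates `ℳ`. Hence
`|G \ U(M₀)| ≤ |U(M₀) ∩ B|`, and adding this for two members of `ℳ`, whose sets `U` are
disjoint, gives `|G| ≤ |B|`.
-/

section Preference

variable {A O : Type*} {pref : A → O → O → Prop} {a : A} {M M' N N' : A → Option O}

lemma PrefM.ne_none (h : PrefM pref a M N) : M a ≠ none := by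
  rcases h with ⟨o, -, hM, -⟩ | ⟨o, hM, -⟩ <;> simp [hM]

lemma prefM_of_eq_none (hM : M a ≠ none) (hN : N a = none) : PrefM pref a M N := by
  obtain ⟨o, ho⟩ := Option.ne_none_iff_exists'.mp hM
  exact Or.inr ⟨o, ho, hN⟩

lemma prefM_congr (hM : M a = M' a) (hN : N a = N' a) :
    PrefM pref a M N ↔ PrefM pref a M' N' := by
  simp only [PrefM, hM, hN]

variable {adj : A → O → Prop}

lemma IsPrefOrder.prefM_irrefl (hpref : IsPrefOrder adj pref) (a : A) (M : A → Option O) :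
    ¬ PrefM pref a M M := by
  rintro (⟨o, o', h, h', hp⟩ | ⟨o, h, h'⟩)
  · obtain rfl : o = o' := Option.some_injective _ (h.symm.trans h')
    exact (hpref a).1 o hp
  · simp [h] at h'

lemma IsPrefOrder.prefM_trans (hpref : IsPrefOrder adj pref) {a : A} {M₁ M₂ M₃ : A → Option O}
    (h₁₂ : PrefM pref a M₁ M₂) (h₂₃ : PrefM pref a M₂ M₃) : PrefM pref a M₁ M₃ := by
  rcases h₁₂ with ⟨o, o', h₁, h₂, hp⟩ | ⟨o, h₁, h₂⟩
  · rcases h₂₃ with ⟨p, p', h₂', h₃, hp'⟩ | ⟨p, h₂', h₃⟩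
    · obtain rfl : o' = p := Option.some_injective _ (h₂.symm.trans h₂')
      exact Or.inl ⟨o, p', h₁, h₃, (hpref a).2.1 _ _ _ hp hp'⟩
    · exact Or.inr ⟨o, h₁, h₃⟩
  · exact absurd h₂ h₂₃.ne_none

end Preference

def Undominated {A O : Type*} (pref : A → O → O → Prop) (Mset : Set (A → Option O)) (a : A)
    (M : A → Option O) : Prop :=
  ∀ M' ∈ Mset, ¬ PrefM pref a M' M

lemma IsPrefOrder.exists_undominated {A O : Type*} {adj : A → O → Prop}
    {pref : A → O → O → Prop} (hpref : IsPrefOrder adj pref) {Mset : Set (A → Option O)}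
    (hfin : Mset.Finite) (hne : Mset.Nonempty) (a : A) :
    ∃ M ∈ Mset, Undominated pref Mset a M := by
  have : IsStrictOrder _ (PrefM pref a) :=
    { irrefl := hpref.prefM_irrefl a, trans := fun _ _ _ => hpref.prefM_trans }
  obtain ⟨⟨M, hM⟩, -, hmin⟩ :=
    (hfin.wellFoundedOn (r := PrefM pref a)).has_min Set.univ ⟨⟨_, hne.some_mem⟩, trivial⟩
  exact ⟨M, hM, fun M' hM' => hmin ⟨M', hM'⟩ trivial⟩

section Exchange

variable {A O : Type*} {adj : A → O → Prop} {Mat : Matroid O} {M N Z : A → Option O}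

lemma encard_matchedObjs_le {S : Finset A} (hZ : ∀ a ∉ S, Z a = none) :
    (matchedObjs Z).encard ≤ S.card := by
  have hsub : matchedObjs Z ⊆ Option.some ⁻¹' (Z '' S) := by
    rintro o ⟨a, ha⟩
    exact ⟨a, by_contra fun h => by simp [hZ a h] at ha, ha⟩
  calc (matchedObjs Z).encard ≤ (Option.some ⁻¹' (Z '' S)).encard := Set.encard_le_encard hsub
    _ = (Option.some '' (Option.some ⁻¹' (Z '' S))).encard :=
      (Option.some_injective O).encard_image _ |>.symm
    _ ≤ (Z '' S).encard := Set.encard_le_encard (Set.image_preimage_subset _ _)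
    _ ≤ S.card := (Set.encard_image_le _ _).trans (Set.encard_coe_eq_coe_finsetCard S).le

lemma IsMatching.encard_preimage_image {T : Finset A} (hN : IsMatching adj N)
    (hT : ∀ a ∈ T, N a ≠ none) : (Option.some ⁻¹' (N '' T)).encard = T.card := by
  have hinj : Set.InjOn N T := by
    intro a ha b hb hab
    obtain ⟨o, ho⟩ := Option.ne_none_iff_exists'.mp (hT a ha)
    exact hN.2 a b o ho (hab ▸ ho)
  have hrange : N '' T ⊆ Set.range Option.some := by
    rintro _ ⟨a, ha, rfl⟩
    exact Option.ne_none_iff_exists.mp (hT a ha)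
  rw [Set.encard_preimage_of_injective_subset_range (Option.some_injective O) hrange,
    hinj.encard_image, Set.encard_coe_eq_coe_finsetCard]

lemma IsConstrained.of_forall_eq_none_or_eq (hM : IsConstrained adj Mat M)
    (hZ : ∀ a, Z a = none ∨ Z a = M a) : IsConstrained adj Mat Z := by
  have hZM : ∀ a o, Z a = some o → M a = some o := fun a o h => by
    rcases hZ a with h' | h' <;> simp_all
  refine ⟨⟨fun a o h => hM.1.1 a o (hZM a o h), fun a a' o h h' => hM.1.2 a a' o (hZM a o h)
    (hZM a' o h')⟩, hM.2.subset ?_⟩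
  rintro o ⟨a, ha⟩
  exact ⟨a, hZM a o ha⟩

lemma matchedObjs_update_subset (Z : A → Option O) (a : A) (z : O) :
    matchedObjs (Function.update Z a (some z)) ⊆ insert z (matchedObjs Z) := by
  rintro o ⟨b, hb⟩
  rcases eq_or_ne b a with rfl | hba
  · simp_all
  · simp only [Function.update_of_ne hba] at hb
    exact Or.inr ⟨b, hb⟩

lemma IsConstrained.update (hZ : IsConstrained adj Mat Z) {a : A} {z : O} (hadj : adj a z)
    (hz : z ∉ matchedObjs Z) (hind : Mat.Indep (insert z (matchedObjs Z))) :
    IsConstrained adj Mat (Function.update Z a (some z)) := by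
  have hval : ∀ b o, Function.update Z a (some z) b = some o →
      (b = a ∧ o = z) ∨ (b ≠ a ∧ Z b = some o) := by
    intro b o hb
    rcases eq_or_ne b a with rfl | _ <;> simp_all
  refine ⟨⟨fun b o hb => ?_, fun b b' o hb hb' => ?_⟩,
    hind.subset (matchedObjs_update_subset Z a z)⟩
  · rcases hval b o hb with ⟨rfl, rfl⟩ | ⟨-, hb⟩
    exacts [hadj, hZ.1.1 b o hb]
  · rcases hval b o hb with ⟨rfl, rfl⟩ | ⟨-, hZb⟩ <;>
      rcases hval b' o hb' with ⟨rfl, ho⟩ | ⟨-, hZb'⟩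
    · rfl
    · exact absurd ⟨b', hZb'⟩ hz
    · exact absurd ⟨b, ho ▸ hZb⟩ hz
    · exact hZ.1.2 b b' o hZb hZb'

/-- Matroid augmentation, applied to the objects that `N` assigns to `T`. -/
lemma IsConstrained.exists_update (hZ : IsConstrained adj Mat Z) (hN : IsConstrained adj Mat N)
    {T : Finset A} (hT : ∀ a ∈ T, N a ≠ none) (hlt : (matchedObjs Z).encard < T.card) :
    ∃ a ∈ T, Z a ≠ N a ∧ IsConstrained adj Mat (Function.update Z a (N a)) := by
  have hJ : Mat.Indep (Option.some ⁻¹' (N '' T)) :=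
    hN.2.subset fun o ⟨a, _, ha⟩ => ⟨a, ha⟩
  rw [← hN.1.encard_preimage_image hT] at hlt
  obtain ⟨z, ⟨⟨a, haT, ha⟩, hz⟩, hind⟩ := hZ.2.augment hJ hlt
  refine ⟨a, haT, fun h => hz ⟨a, h.trans ha⟩, ?_⟩
  rw [ha]
  exact hZ.update (hN.1.1 a z ha) hz hind

/-- Starting from `M` on `S`, the agents of `Q ⊆ S` are switched to `N` one at a time until an
agent of `R` can be added with its partner in `N`. -/
theorem IsConstrained.exists_exchange (hM : IsConstrained adj Mat M)
    (hN : IsConstrained adj Mat N) {S Q R : Finset A} (hQS : Q ⊆ S)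
    (hQR : ∀ a ∈ Q ∪ R, N a ≠ none) (hSR : Disjoint S R) (hcard : (S \ Q).card < R.card) :
    ∃ F ⊆ Q, ∃ r ∈ R,
      IsConstrained adj Mat ((insert r F).piecewise N (S.piecewise M fun _ => none)) := by
  set base : A → Option O := S.piecewise M fun _ => none
  suffices h : ∀ n, ∀ F ⊆ Q, (Q \ F).card = n → IsConstrained adj Mat (F.piecewise N base) →
      ∃ F ⊆ Q, ∃ r ∈ R, IsConstrained adj Mat ((insert r F).piecewise N base) by
    refine h _ ∅ (Finset.empty_subset Q) rfl ?_
    rw [Finset.piecewise_empty]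
    refine hM.of_forall_eq_none_or_eq fun a => ?_
    by_cases ha : a ∈ S <;> simp [base, ha]
  intro n
  induction n using Nat.strong_induction_on with
  | _ n ih =>
  intro F hFQ hn hF
  have hlt : (matchedObjs (F.piecewise N base)).encard < (Q ∪ R).card := by
    have hsupp : ∀ a ∉ S, F.piecewise N base a = none := fun a ha => by
      rw [Finset.piecewise_eq_of_notMem _ _ _ fun h => ha (hQS (hFQ h))]
      simp [base, ha]
    have hSQ : S.card < (Q ∪ R).card := by
      rw [Finset.card_union_of_disjoint (hSR.mono_left hQS),
        ← Finset.card_sdiff_add_card_eq_card hQS]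
      omega
    exact (encard_matchedObjs_le hsupp).trans_lt (by exact_mod_cast hSQ)
  obtain ⟨a, haQR, hne, hupd⟩ := hF.exists_update hN hQR hlt
  have haF : a ∉ F := fun h => hne (Finset.piecewise_eq_of_mem _ _ _ h)
  rw [← Finset.piecewise_insert] at hupd
  rcases Finset.mem_union.mp haQR with haQ | haR
  · refine ih _ ?_ (insert a F) (Finset.insert_subset haQ hFQ) rfl hupd
    rw [← hn, Finset.sdiff_insert]
    exact Finset.card_erase_lt_of_mem (Finset.mem_sdiff.mpr ⟨haQ, haF⟩)
  · exact ⟨F, hFQ, a, haR, hupd⟩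

end Exchange

def soleBestAgents {A O : Type*} (pref : A → O → O → Prop) (Mset : Set (A → Option O))
    (M₀ : A → Option O) : Set A :=
  {a | Undominated pref Mset a M₀ ∧ (∀ M ∈ Mset, Undominated pref Mset a M → M = M₀) ∧
    M₀ a ≠ none}

section Pareto

variable {A O : Type*} {pref : A → O → O → Prop} {Mset : Set (A → Option O)}

lemma disjoint_soleBestAgents {M₁ M₂ : A → Option O} (hM₁ : M₁ ∈ Mset) (hne : M₁ ≠ M₂) :
    Disjoint (soleBestAgents pref Mset M₁) (soleBestAgents pref Mset M₂) :=
  Set.disjoint_left.mpr fun _ h₁ h₂ => hne (h₂.2.1 _ hM₁ h₁.1)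

/-- Replacing `M₀` by `Z` in `Mset` would give a Pareto-dominating set. -/
theorem not_paretoOptimal_of_replace {adj : A → O → Prop} (hpref : IsPrefOrder adj pref)
    {F : Set (A → Option O)} (hfin : Mset.Finite) (hfeas : Mset ⊆ F) {M₀ Z : A → Option O}
    (hM₀ : M₀ ∈ Mset) (hZ : Z ∈ F)
    (hcover : ∀ a ∈ soleBestAgents pref Mset M₀, Undominated pref Mset a Z) {r : A}
    (hr : ∀ M ∈ Mset, PrefM pref r Z M) : ¬ ParetoOptimal pref F Mset := by
  intro hPO
  refine hPO ⟨insert Z (Mset \ {M₀}), Set.insert_subset hZ (Set.sdiff_subset.trans hfeas),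
    ?_, fun a => ?_, r, Z, Set.mem_insert _ _, hr⟩
  · calc (insert Z (Mset \ {M₀})).ncard ≤ (Mset \ {M₀}).ncard + 1 := Set.ncard_insert_le _ _
      _ = Mset.ncard := Set.ncard_sdiff_singleton_add_one hM₀ hfin
  by_cases hsole : ∀ M ∈ Mset, Undominated pref Mset a M → M = M₀
  swap
  · push Not at hsole
    obtain ⟨M, hM, hund, hne⟩ := hsole
    exact ⟨M, Or.inr ⟨hM, hne⟩, hund⟩
  have hM₀a : Undominated pref Mset a M₀ := by
    obtain ⟨M, hM, hund⟩ := hpref.exists_undominated hfin ⟨_, hM₀⟩ a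
    rwa [← hsole M hM hund]
  refine ⟨Z, Set.mem_insert _ _, ?_⟩
  by_cases hnone : M₀ a = none
  · exact fun M hM hMZ => hM₀a M hM (prefM_of_eq_none hMZ.ne_none hnone)
  · exact hcover a ⟨hM₀a, hsole, hnone⟩

theorem ncard_diff_soleBestAgents_le [Fintype A] {adj : A → O → Prop} {Mat : Matroid O}
    (hpref : IsPrefOrder adj pref) (hfin : Mset.Finite)
    (hfeas : ∀ M ∈ Mset, IsConstrained adj Mat M)
    (hPO : ParetoOptimal pref {M | IsConstrained adj Mat M} Mset) {M₀ N : A → Option O}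
    (hM₀ : M₀ ∈ Mset) (hN : IsConstrained adj Mat N) :
    ({a | ∀ M ∈ Mset, PrefM pref a N M} \ soleBestAgents pref Mset M₀).ncard ≤
      (soleBestAgents pref Mset M₀ ∩ {a | ∃ M ∈ Mset, PrefM pref a M N}).ncard := by
  set U := soleBestAgents pref Mset M₀
  set G := {a | ∀ M ∈ Mset, PrefM pref a N M}
  set B := {a | ∃ M ∈ Mset, PrefM pref a M N}
  by_contra! hlt
  have hQR : ∀ a ∈ (U \ B).toFinset ∪ (G \ U).toFinset, N a ≠ none := by
    intro a ha
    simp only [Finset.mem_union, Set.mem_toFinset] at ha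
    rcases ha with ⟨haU, haB⟩ | ⟨haG, -⟩
    · exact fun hNa => haB ⟨M₀, hM₀, prefM_of_eq_none haU.2.2 hNa⟩
    · exact (haG M₀ hM₀).ne_none
  have hcard : (U.toFinset \ (U \ B).toFinset).card < (G \ U).toFinset.card := by
    have hSQ : U.toFinset \ (U \ B).toFinset = (U ∩ B).toFinset := by
      ext a
      simp only [Finset.mem_sdiff, Set.mem_toFinset, Set.mem_sdiff, Set.mem_inter_iff]
      tauto
    rwa [hSQ, ← Set.ncard_eq_toFinset_card', ← Set.ncard_eq_toFinset_card']
  obtain ⟨F, hFQ, r, hrR, hZ⟩ := (hfeas M₀ hM₀).exists_exchange hN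
    (Set.toFinset_subset_toFinset.mpr Set.sdiff_subset) hQR
    (Set.disjoint_toFinset.mpr Set.disjoint_sdiff_right) hcard
  set Z := (insert r F).piecewise N (U.toFinset.piecewise M₀ fun _ => none)
  have hrGU : r ∈ G \ U := Set.mem_toFinset.mp hrR
  have hZr : Z r = N r := Finset.piecewise_eq_of_mem _ _ _ (Finset.mem_insert_self r F)
  refine not_paretoOptimal_of_replace hpref hfin hfeas hM₀ hZ (fun a haU => ?_)
    (fun M hM => (prefM_congr hZr rfl).mpr (hrGU.1 M hM)) hPO
  by_cases haF : a ∈ F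
  · have haB : a ∉ B := (Set.mem_toFinset.mp (hFQ haF)).2
    have hZa : Z a = N a := Finset.piecewise_eq_of_mem _ _ _ (Finset.mem_insert_of_mem haF)
    exact fun M hM hMZ => haB ⟨M, hM, (prefM_congr rfl hZa).mp hMZ⟩
  · have hZa : Z a = M₀ a := by
      have har : a ≠ r := fun h => hrGU.2 (h ▸ haU)
      have haU' : a ∈ U.toFinset := Set.mem_toFinset.mpr haU
      simp [Z, haF, har, haU']
    exact fun M hM hMZ => haU.1 M hM ((prefM_congr rfl hZa).mp hMZ)

end Pareto

lemma ncard_le_ncard_of_disjoint_of_diff_le_inter {α : Type*} [Finite α] {U V G B : Set α}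
    (hUV : Disjoint U V) (hU : (G \ U).ncard ≤ (U ∩ B).ncard)
    (hV : (G \ V).ncard ≤ (V ∩ B).ncard) : G.ncard ≤ B.ncard :=
  calc G.ncard = (G \ U ∪ G \ V).ncard := by
        rw [← Set.sdiff_inter, hUV.inter_eq, Set.sdiff_empty]
    _ ≤ (G \ U).ncard + (G \ V).ncard := Set.ncard_union_le _ _
    _ ≤ (U ∩ B).ncard + (V ∩ B).ncard := add_le_add hU hV
    _ = (U ∩ B ∪ V ∩ B).ncard :=
      (Set.ncard_union_eq (hUV.mono Set.inter_subset_left Set.inter_subset_left)).symm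
    _ ≤ B.ncard := Set.ncard_le_ncard (Set.union_subset Set.inter_subset_right
      Set.inter_subset_right)

theorem pareto_optimal_popular_matroid_general
    {A O : Type*} [Fintype A]
    (adj : A → O → Prop) (pref : A → O → O → Prop)
    (hpref : IsPrefOrder adj pref)
    (Mat : Matroid O)
    (Mset : Set (A → Option O))
    (hfeas : ∀ M ∈ Mset, IsConstrained adj Mat M)
    (hcard : 2 ≤ Mset.ncard)
    (hPO : ParetoOptimal pref {M | IsConstrained adj Mat M} Mset) :
    Popular pref {M | IsConstrained adj Mat M} Mset := by
  intro N hN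
  have hfin : Mset.Finite := Set.finite_of_ncard_pos (by omega)
  obtain ⟨M₁, M₂, hM₁, hM₂, hne⟩ := (Set.one_lt_ncard_iff hfin).mp hcard
  exact ncard_le_ncard_of_disjoint_of_diff_le_inter (disjoint_soleBestAgents hM₁ hne)
    (ncard_diff_soleBestAgents_le hpref hfin hfeas hPO hM₁ hN)
    (ncard_diff_soleBestAgents_le hpref hfin hfeas hPO hM₂ hN)

/-- In a matroid-constrained matching instance with partial-order
preferences, every Pareto-optimal set of at least two `ℐ`-constrained matchings is
popular among the `ℐ`-constrained matchings. -/
theorem pareto_optimal_popular_matroid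
    {A O : Type*} [Fintype A] [Fintype O]
    (adj : A → O → Prop) (pref : A → O → O → Prop)
    (hpref : IsPrefOrder adj pref)
    (Mat : Matroid O) (hE : Mat.E = Set.univ)
    (Mset : Set (A → Option O))
    (hfeas : ∀ M ∈ Mset, IsConstrained adj Mat M)
    (hcard : 2 ≤ Mset.ncard)
    (hPO : ParetoOptimal pref {M | IsConstrained adj Mat M} Mset) :
    Popular pref {M | IsConstrained adj Mat M} Mset :=
  pareto_optimal_popular_matroid_general adj pref hpref Mat Mset hfeas hcard hPO
end

section
/- Let ℐ be a matroid on the object set O, and let M, N be two ℐ-constrained matchings in a matching instance such that every agent is matched in both M and N and both M(A) and N(A) are bases of ℐ. Let P be a directed path from agent a' to agent b' in the exchange graph D_{N→M}, and let A(P) be the set of agents on P. Then there exists A' ⊆ A(P) with a', b' ∈ A' such that the assignment M' defined by M'(a) = N(a) for all a ∈ A' \ {b'}, M'(b') = ∅ (b' unmatched), and M'(a) = M(a) for all a ∈ A \ A' is an ℐ-constrained matching. -/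
open scoped Classical

/-- The fundamental circuit `C(X, o)` of `o` with respect to a basis `X`. -/
noncomputable def fundCircuit {O : Type*} (Mat : Matroid O) (X : Set O) (o : O) : Set O :=
  if o ∈ X then {o} else {x ∈ X | Mat.Indep (insert o (X \ {x}))}

/-- The exchange graph `D_{N→M}` on the agents, for fully matched matchings given by
`m n : A → O`: there is an arc `(a, b)` whenever `M(b) ∈ C(M(A), N(a))`. -/
def exchArc {A O : Type*} (Mat : Matroid O) (m n : A → O) (a b : A) : Prop :=
  m b ∈ fundCircuit Mat (Set.range m) (n a)

/-- A directed path from `s` to `t`, given as a nonempty list of pairwise distinct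
nodes with arcs between consecutive nodes, starting at `s` and ending at `t`. -/
def IsPath {V : Type*} (arc : V → V → Prop) (p : List V) (s t : V) : Prop :=
  p ≠ [] ∧ p.Nodup ∧ p.Chain' arc ∧ p.head? = some s ∧ p.getLast? = some t

/-!
Shorten the path until it has no shortcut arc `a_i → a_j` with `j ≥ i + 2`, and let `A'` be its
agents `a_0, …, a_k`. With `X = M(A)`, `x_i = M(a_{i+1})`, `y_i = N(a_i)` and
`Z_l = X \ {x_l, …, x_{k-1}}`, the arc `a_i → a_{i+1}` says `y_i ∉ cl(X - x_i) ⊇ cl(Z_i)`, while the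
missing arcs say `y_i ∈ cl(X - x_j)` for all `j > i`, hence `y_i ∈ cl(Z_{i+1})` because closure
commutes with intersections of subsets of a base. Thus `Z_0 ∪ {y_0, …, y_{l-1}} ⊆ cl(Z_l)` does not
span `y_l`, so adding `y_0, …, y_{k-1}` to `Z_0` one at a time keeps it independent, and this set
contains `M'(A)`.
-/

open Set

namespace Matroid

variable {α : Type*} {M : Matroid α} {X F : Set α} {e : α}

lemma IsBase.mem_closure_sdiff_of_forall_mem_closure_sdiff_singleton (hX : M.IsBase X)
    (he : e ∈ M.E) (h : ∀ f ∈ F, e ∈ M.closure (X \ {f})) : e ∈ M.closure (X \ F) := by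
  obtain rfl | hF := F.eq_empty_or_nonempty
  · rwa [sdiff_empty, hX.closure_eq]
  have hXF : X \ F = ⋂ f ∈ F, X \ {f} := by
    ext; simp only [mem_sdiff, mem_iInter₂, mem_singleton_iff]
    exact ⟨fun h f hf ↦ ⟨h.1, ne_of_mem_of_not_mem hf h.2 ∘ Eq.symm⟩,
      fun h ↦ ⟨(h _ hF.some_mem).1, fun hf ↦ (h _ hf).2 rfl⟩⟩
  rw [hXF, closure_biInter_eq_biInter_closure_of_biUnion_indep hF (I := fun f ↦ X \ {f})
    (hX.indep.subset (iUnion₂_subset fun _ _ ↦ sdiff_subset))]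
  exact mem_iInter₂.2 h

lemma Indep.sdiff_image_union_image_indep (hX : M.Indep X) (x y : ℕ → α) (k : ℕ)
    (hyE : ∀ i < k, y i ∈ M.E)
    (hspan : ∀ i < k, y i ∈ M.closure (X \ x '' Ioo i k))
    (hnot : ∀ i < k, y i ∉ M.closure (X \ x '' Ico i k)) :
    M.Indep ((X \ x '' Iio k) ∪ y '' Iio k) := by
  have hsub_closure : ∀ l ≤ k, (X \ x '' Iio k) ∪ y '' Iio l ⊆ M.closure (X \ x '' Ico l k) := by
    rintro l hl e (⟨heX, hex⟩ | ⟨j, hj, rfl⟩)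
    · refine M.mem_closure_of_mem ⟨heX, fun he ↦ hex ?_⟩ (sdiff_subset.trans hX.subset_ground)
      exact image_mono (fun i hi ↦ hi.2) he
    · refine M.closure_subset_closure (sdiff_subset_sdiff_right (image_mono ?_))
        (hspan j (by grind))
      exact fun i hi ↦ ⟨by grind, hi.2⟩
  suffices ∀ l ≤ k, M.Indep ((X \ x '' Iio k) ∪ y '' Iio l) from this k le_rfl
  intro l hl
  induction l with
  | zero => simpa using hX.sdiff _
  | succ l ih =>
    rw [Iio_add_one_eq_Iic, ← Iio_insert, image_insert_eq, union_insert,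
      (ih (by omega)).insert_indep_iff]
    refine Or.inl ⟨hyE l (by omega), fun h ↦ hnot l (by omega) ?_⟩
    exact M.closure_subset_closure_of_subset_closure (hsub_closure l (by omega)) h

end Matroid

section FundCircuit

variable {O : Type*} {Mat : Matroid O} {X : Set O} {o e : O}

lemma eq_of_mem_fundCircuit_of_mem (ho : o ∈ X) (h : e ∈ fundCircuit Mat X o) : e = o := by
  rwa [fundCircuit, if_pos ho] at h

lemma notMem_closure_sdiff_of_mem_fundCircuit (hX : Mat.Indep X) (h : e ∈ fundCircuit Mat X o) :
    o ∉ Mat.closure (X \ {e}) := by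
  by_cases ho : o ∈ X
  · rw [eq_of_mem_fundCircuit_of_mem ho h]
    exact hX.notMem_closure_sdiff_of_mem ho
  · rw [fundCircuit, if_neg ho] at h
    exact fun hcl ↦ ((hX.sdiff _).insert_indep_iff_of_notMem (fun h' ↦ ho h'.1)).1 h.2 |>.2 hcl

lemma mem_closure_sdiff_of_notMem_fundCircuit (hX : Mat.Indep X) (hoE : o ∈ Mat.E) (he : e ∈ X)
    (h : e ∉ fundCircuit Mat X o) : o ∈ Mat.closure (X \ {e}) := by
  by_cases ho : o ∈ X
  · rw [fundCircuit, if_pos ho, mem_singleton_iff] at h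
    exact Mat.mem_closure_of_mem ⟨ho, Ne.symm h⟩ (sdiff_subset.trans hX.subset_ground)
  · rw [fundCircuit, if_neg ho] at h
    by_contra hcl
    exact h ⟨he, ((hX.sdiff _).insert_indep_iff_of_notMem (fun h' ↦ ho h'.1)).2 ⟨hoE, hcl⟩⟩

end FundCircuit

section Walk

variable {V : Type*} {arc : V → V → Prop} {S : Set V} {s t : V} {k : ℕ} {v : ℕ → V}

structure IsWalkIn (arc : V → V → Prop) (S : Set V) (s t : V) (k : ℕ) (v : ℕ → V) : Prop where
  zero : v 0 = s
  last : v k = t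
  mem : ∀ i ≤ k, v i ∈ S
  step : ∀ i < k, arc (v i) (v (i + 1))

lemma IsPath.isWalkIn {p : List V} (hp : IsPath arc p s t) :
    IsWalkIn arc {a | a ∈ p} s t (p.length - 1) (fun i ↦ p.getD i s) := by
  obtain ⟨hne, -, hchain, hhead, hlast⟩ := hp
  have hlen : 0 < p.length := List.length_pos_iff.2 hne
  have hget : ∀ i (hi : i < p.length), p.getD i s = p[i] := fun i hi ↦ by
    simp [List.getD_eq_getElem?_getD, hi]
  refine ⟨?_, ?_, fun i hi ↦ ?_, fun i hi ↦ ?_⟩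
  · rw [hget 0 hlen]
    simpa [List.head?_eq_getElem?, hlen] using hhead
  · rw [hget _ (by omega)]
    simpa [List.getLast?_eq_getElem?, hlen] using hlast
  · rw [hget i (by omega)]
    exact List.getElem_mem _
  · rw [hget i (by omega), hget (i + 1) (by omega)]
    exact List.isChain_iff_getElem.1 hchain i (by omega)

lemma IsWalkIn.skip (hv : IsWalkIn arc S s t k v) {i j : ℕ} (hij : i + 2 ≤ j) (hjk : j ≤ k)
    (hvij : arc (v i) (v j)) :
    IsWalkIn arc S s t (k - (j - i - 1)) (fun l ↦ if l ≤ i then v l else v (l + (j - i - 1))) := by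
  refine ⟨by simpa using hv.zero, ?_, fun l hl ↦ ?_, fun l hl ↦ ?_⟩
  · rw [if_neg (by omega), ← hv.last]
    congr 1
    omega
  · split_ifs
    exacts [hv.mem l (by omega), hv.mem _ (by omega)]
  · rcases lt_trichotomy l i with hli | rfl | hli
    · simp only [if_pos hli.le, if_pos (show l + 1 ≤ i by omega)]
      exact hv.step l (by omega)
    · simpa [show l + 1 + (j - l - 1) = j by omega] using hvij
    · simp only [if_neg (show ¬ l ≤ i by omega), if_neg (show ¬ l + 1 ≤ i by omega),
        show l + 1 + (j - i - 1) = l + (j - i - 1) + 1 by omega]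
      exact hv.step _ (by omega)

lemma IsWalkIn.exists_isWalkIn_forall_not_shortcut (hv : IsWalkIn arc S s t k v) :
    ∃ k' v', IsWalkIn arc S s t k' v' ∧ ∀ i j, i + 2 ≤ j → j ≤ k' → ¬ arc (v' i) (v' j) := by
  induction k using Nat.strong_induction_on generalizing v with
  | _ k ih =>
    by_cases hshort : ∀ i j, i + 2 ≤ j → j ≤ k → ¬ arc (v i) (v j)
    · exact ⟨k, v, hv, hshort⟩
    · simp only [not_forall, not_not] at hshort
      obtain ⟨i, j, hij, hjk, hvij⟩ := hshort
      exact ih _ (by omega) (hv.skip hij hjk hvij)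

end Walk

section Reassign

variable {A O : Type*} {adj : A → O → Prop} {m n : A → O} {S : Set A} {b : A}

lemma IsMatching.injective (h : IsMatching adj fun a ↦ some (m a)) : Function.Injective m :=
  fun a c hac ↦ h.2 a c (m a) rfl (by rw [hac])

noncomputable def reassign (m n : A → O) (S : Set A) (b : A) : A → Option O :=
  fun a ↦ if a = b then none else if a ∈ S then some (n a) else some (m a)

lemma reassign_eq_some {a : A} {o : O} :
    reassign m n S b a = some o ↔ a ≠ b ∧ (a ∈ S ∧ n a = o ∨ a ∉ S ∧ m a = o) := by
  unfold reassign
  split_ifs <;> simp_all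

lemma IsMatching.reassign (hm : IsMatching adj fun a ↦ some (m a))
    (hn : IsMatching adj fun a ↦ some (n a)) (hS : ∀ a ∈ S, a ≠ b → ∀ c, n a = m c → c ∈ S) :
    IsMatching adj (reassign m n S b) := by
  refine ⟨fun a o h ↦ ?_, fun a c o ha hc ↦ ?_⟩
  · obtain ⟨-, ⟨-, rfl⟩ | ⟨-, rfl⟩⟩ := reassign_eq_some.1 h
    exacts [hn.1 a _ rfl, hm.1 a _ rfl]
  · obtain ⟨hab, ⟨haS, rfl⟩ | ⟨haS, rfl⟩⟩ := reassign_eq_some.1 ha <;>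
    obtain ⟨hcb, ⟨hcS, hc⟩ | ⟨hcS, hc⟩⟩ := reassign_eq_some.1 hc
    · exact hn.injective hc.symm
    · exact absurd (hS a haS hab c hc.symm) hcS
    · exact absurd (hS c hcS hcb a hc) haS
    · exact hm.injective hc.symm

lemma matchedObjs_reassign_subset :
    matchedObjs (reassign m n S b) ⊆ m '' Sᶜ ∪ n '' (S \ {b}) := by
  rintro o ⟨a, ha⟩
  obtain ⟨hab, ⟨haS, rfl⟩ | ⟨haS, rfl⟩⟩ := reassign_eq_some.1 ha
  exacts [Or.inr ⟨a, ⟨haS, hab⟩, rfl⟩, Or.inl ⟨a, haS, rfl⟩]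

end Reassign

lemma indep_exchange_of_forall_not_shortcut {A O : Type*} {Mat : Matroid O} {m n : A → O}
    (hmB : Mat.IsBase (range m)) (hnE : ∀ a, n a ∈ Mat.E) {v : ℕ → A} {k : ℕ}
    (hstep : ∀ i < k, exchArc Mat m n (v i) (v (i + 1)))
    (hshort : ∀ i j, i + 2 ≤ j → j ≤ k → ¬ exchArc Mat m n (v i) (v j)) :
    Mat.Indep ((range m \ (fun i ↦ m (v (i + 1))) '' Iio k) ∪ (fun i ↦ n (v i)) '' Iio k) := by
  refine hmB.indep.sdiff_image_union_image_indep _ _ k (fun i _ ↦ hnE _)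
    (fun i hi ↦ ?_) (fun i hi hcl ↦ ?_)
  · refine hmB.mem_closure_sdiff_of_forall_mem_closure_sdiff_singleton (hnE _) ?_
    rintro _ ⟨j, hj, rfl⟩
    exact mem_closure_sdiff_of_notMem_fundCircuit hmB.indep (hnE _) (mem_range_self _)
      (hshort i (j + 1) (by grind) (by grind))
  · refine notMem_closure_sdiff_of_mem_fundCircuit hmB.indep (hstep i hi)
      (Mat.closure_subset_closure ?_ hcl)
    exact sdiff_subset_sdiff_right (singleton_subset_iff.2 ⟨i, ⟨le_rfl, hi⟩, rfl⟩)

theorem exchange_along_path_general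
    {A O : Type*}
    (adj : A → O → Prop)
    (Mat : Matroid O)
    (m n : A → O)
    (hm : IsConstrained adj Mat (fun a => some (m a)))
    (hn : IsConstrained adj Mat (fun a => some (n a)))
    (hmB : Mat.IsBase (Set.range m))
    (p : List A) (a' b' : A) (hp : IsPath (exchArc Mat m n) p a' b') :
    ∃ A' : Set A, A' ⊆ {a : A | a ∈ p} ∧ a' ∈ A' ∧ b' ∈ A' ∧
      IsConstrained adj Mat
        (fun a => if a = b' then none
          else if a ∈ A' then some (n a) else some (m a)) := by
  obtain ⟨k, v, hv, hshort⟩ := hp.isWalkIn.exists_isWalkIn_forall_not_shortcut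
  have hnE : ∀ a, n a ∈ Mat.E := fun a ↦ hn.2.subset_ground ⟨a, rfl⟩
  have hindex : ∀ a ∈ v '' Iic k, a ≠ b' → ∃ i < k, v i = a := by
    rintro _ ⟨i, hi, rfl⟩ hib
    exact ⟨i, lt_of_le_of_ne hi fun h ↦ hib (h ▸ hv.last), rfl⟩
  refine ⟨v '' Iic k, image_subset_iff.2 hv.mem,
    hv.zero ▸ mem_image_of_mem v (mem_Iic.2 k.zero_le),
    hv.last ▸ mem_image_of_mem v (mem_Iic.2 le_rfl), hm.1.reassign hn.1 fun a ha hab c hc ↦ ?_,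
    (indep_exchange_of_forall_not_shortcut hmB hnE hv.step hshort).subset
      (matchedObjs_reassign_subset.trans (union_subset_union ?_ ?_))⟩
  · obtain ⟨i, hi, rfl⟩ := hindex a ha hab
    have hstep := eq_of_mem_fundCircuit_of_mem (X := range m) ⟨c, hc.symm⟩ (hv.step i hi)
    rw [← hm.1.injective (hstep.trans hc)]
    exact mem_image_of_mem v (mem_Iic.2 hi)
  · rintro _ ⟨a, haS, rfl⟩
    refine ⟨mem_range_self a, fun ⟨j, hj, hja⟩ ↦ haS ?_⟩
    rw [← hm.1.injective hja]
    exact mem_image_of_mem v (mem_Iic.2 hj)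
  · rintro _ ⟨a, ⟨haS, hab⟩, rfl⟩
    obtain ⟨i, hi, rfl⟩ := hindex a haS hab
    exact ⟨i, hi, rfl⟩

/-- Given two everywhere-matched `ℐ`-constrained matchings `m`, `n`
whose matched object sets are bases, and a directed path `p` from `a'` to `b'` in the
exchange graph `D_{N→M}`, there is a subset `A'` of the agents on `p` containing `a'`
and `b'` such that reassigning the agents of `A' \ {b'}` to their objects under `n`
and leaving `b'` unmatched yields an `ℐ`-constrained matching. -/
theorem exchange_along_path
    {A O : Type*} [Fintype A] [Fintype O]
    (adj : A → O → Prop)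
    (Mat : Matroid O) (hE : Mat.E = Set.univ)
    (m n : A → O)
    (hm : IsConstrained adj Mat (fun a => some (m a)))
    (hn : IsConstrained adj Mat (fun a => some (n a)))
    (hmB : Mat.IsBase (Set.range m)) (hnB : Mat.IsBase (Set.range n))
    (p : List A) (a' b' : A) (hp : IsPath (exchArc Mat m n) p a' b') :
    ∃ A' : Set A, A' ⊆ {a : A | a ∈ p} ∧ a' ∈ A' ∧ b' ∈ A' ∧
      IsConstrained adj Mat
        (fun a => if a = b' then none
          else if a ∈ A' then some (n a) else some (m a)) :=
  exchange_along_path_general adj Mat m n hm hn hmB p a' b' hp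
end
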